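/- For every pure universality LTL formula ν, every finite word u ∈ Σ* and every infinite word w ∈ Σ^ω: if uw ⊨ ν then w ⊨ ν (pure universality formulae define suffix closed languages). -/
import Mathlib


/-- Syntax of LTL formulae over atomic propositions `AP`. -/
inductive LTL (AP : Type) : Type
  | tt    : LTL AP
  | atom  : AP → LTL AP
  | not   : LTL AP → LTL AP
  | or    : LTL AP → LTL AP → LTL AP
  | and   : LTL AP → LTL AP → LTL AP
  | next  : LTL AP → LTL AP
  | untl  : LTL AP → LTL AP → LTL AP

namespace LTL

/-- Derived operator `F` (eventually). -/
def F {AP : Type} (φ : LTL AP) : LTL AP := untl tt φ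

/-- Derived operator `G` (always). -/
def G {AP : Type} (φ : LTL AP) : LTL AP := not (F (not φ))

/-- Derived operator `R` (release). -/
def R {AP : Type} (φ ψ : LTL AP) : LTL AP := not (untl (not φ) (not ψ))

end LTL

/-- The `k`-th suffix of an infinite word. -/
def suffix {AP : Type} (w : ℕ → Set AP) (k : ℕ) : ℕ → Set AP :=
  fun i => w (i + k)

/-- Concatenation of a finite word `u` with an infinite word `w`. -/
def cat {AP : Type} (u : List (Set AP)) (w : ℕ → Set AP) : ℕ → Set AP :=
  fun i => if h : i < u.length then u.get ⟨i, h⟩ else w (i - u.length)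

/-- Satisfaction relation `w ⊨ φ` of LTL over infinite words `w : ℕ → Set AP`. -/
def Sat {AP : Type} : LTL AP → (ℕ → Set AP) → Prop
  | .tt, _ => True
  | .atom a, w => a ∈ w 0
  | .not φ, w => ¬ Sat φ w
  | .or φ ψ, w => Sat φ w ∨ Sat ψ w
  | .and φ ψ, w => Sat φ w ∧ Sat ψ w
  | .next φ, w => Sat φ (suffix w 1)
  | .untl φ ψ, w => ∃ i, Sat ψ (suffix w i) ∧ ∀ j < i, Sat φ (suffix w j)

/-- Pure eventuality formulae: μ ::= Fφ | μ∨μ | μ∧μ | Xμ | φUμ | μRμ | Gμ. -/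
inductive PureEventuality {AP : Type} : LTL AP → Prop
  | fin (φ : LTL AP) : PureEventuality (LTL.F φ)
  | or {μ₁ μ₂ : LTL AP} : PureEventuality μ₁ → PureEventuality μ₂ →
      PureEventuality (LTL.or μ₁ μ₂)
  | and {μ₁ μ₂ : LTL AP} : PureEventuality μ₁ → PureEventuality μ₂ →
      PureEventuality (LTL.and μ₁ μ₂)
  | next {μ : LTL AP} : PureEventuality μ → PureEventuality (LTL.next μ)
  | untl (φ : LTL AP) {μ : LTL AP} : PureEventuality μ →
      PureEventuality (LTL.untl φ μ)
  | rel {μ₁ μ₂ : LTL AP} : PureEventuality μ₁ → PureEventuality μ₂ →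
      PureEventuality (LTL.R μ₁ μ₂)
  | glob {μ : LTL AP} : PureEventuality μ → PureEventuality (LTL.G μ)

/-- Pure universality formulae: ν ::= Gφ | ν∨ν | ν∧ν | Xν | νUν | φRν | Fν. -/
inductive PureUniversality {AP : Type} : LTL AP → Prop
  | glob (φ : LTL AP) : PureUniversality (LTL.G φ)
  | or {ν₁ ν₂ : LTL AP} : PureUniversality ν₁ → PureUniversality ν₂ →
      PureUniversality (LTL.or ν₁ ν₂)
  | and {ν₁ ν₂ : LTL AP} : PureUniversality ν₁ → PureUniversality ν₂ →
      PureUniversality (LTL.and ν₁ ν₂)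
  | next {ν : LTL AP} : PureUniversality ν → PureUniversality (LTL.next ν)
  | untl {ν₁ ν₂ : LTL AP} : PureUniversality ν₁ → PureUniversality ν₂ →
      PureUniversality (LTL.untl ν₁ ν₂)
  | rel (φ : LTL AP) {ν : LTL AP} : PureUniversality ν →
      PureUniversality (LTL.R φ ν)
  | fin {ν : LTL AP} : PureUniversality ν → PureUniversality (LTL.F ν)

/-- Alternating formulae: ξ ::= Gμ | Fν | ξ∨ξ | ξ∧ξ | Xξ | φUξ | φRξ | Fξ | Gξ. -/
inductive Alternating {AP : Type} : LTL AP → Prop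
  | globEv {μ : LTL AP} : PureEventuality μ → Alternating (LTL.G μ)
  | finUniv {ν : LTL AP} : PureUniversality ν → Alternating (LTL.F ν)
  | or {ξ₁ ξ₂ : LTL AP} : Alternating ξ₁ → Alternating ξ₂ →
      Alternating (LTL.or ξ₁ ξ₂)
  | and {ξ₁ ξ₂ : LTL AP} : Alternating ξ₁ → Alternating ξ₂ →
      Alternating (LTL.and ξ₁ ξ₂)
  | next {ξ : LTL AP} : Alternating ξ → Alternating (LTL.next ξ)
  | untl (φ : LTL AP) {ξ : LTL AP} : Alternating ξ → Alternating (LTL.untl φ ξ)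
  | rel (φ : LTL AP) {ξ : LTL AP} : Alternating ξ → Alternating (LTL.R φ ξ)
  | fin {ξ : LTL AP} : Alternating ξ → Alternating (LTL.F ξ)
  | glob {ξ : LTL AP} : Alternating ξ → Alternating (LTL.G ξ)

-- helpers to insert above the theorem
lemma cat_nil {AP : Type} (w : ℕ → Set AP) : cat ([] : List (Set AP)) w = w := by
  funext i; simp [cat]

lemma suffix_zero {AP : Type} (w : ℕ → Set AP) : suffix w 0 = w := by
  funext i; simp [suffix]

lemma suffix_cat_add {AP : Type} (u : List (Set AP)) (w : ℕ → Set AP) (k : ℕ) :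
    suffix (cat u w) (k + u.length) = suffix w k := by
  funext i
  simp only [suffix, cat]
  rw [dif_neg (by omega : ¬ i + (k + u.length) < u.length),
    show i + (k + u.length) - u.length = i + k from by omega]


lemma suffix_cat_lt {AP : Type} (u : List (Set AP)) (w : ℕ → Set AP) (k : ℕ)
    (hk : k ≤ u.length) : suffix (cat u w) k = cat (u.drop k) w := by
  funext i
  simp only [suffix, cat, List.length_drop]
  by_cases h : i + k < u.length
  · rw [dif_pos h, dif_pos (show i < u.length - k by omega)]
    simp only [List.get_eq_getElem, List.getElem_drop]
    congr 1
    omega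

  · rw [dif_neg h, dif_neg (show ¬ i < u.length - k by omega),
      show i + k - u.length = i - (u.length - k) from by omega]


lemma cat_append {AP : Type} (u v : List (Set AP)) (w : ℕ → Set AP) :
    cat (u ++ v) w = cat u (cat v w) := by
  funext i
  simp only [cat, List.length_append]
  by_cases h1 : i < u.length
  · rw [dif_pos (show i < u.length + v.length by omega), dif_pos h1]
    simp only [List.get_eq_getElem]
    rw [List.getElem_append_left]
  · rw [dif_neg h1]
    by_cases h2 : i < u.length + v.length
    · rw [dif_pos h2, dif_pos (show i - u.length < v.length by omega)]
      simp only [List.get_eq_getElem]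
      rw [List.getElem_append_right (by omega)]
    · rw [dif_neg h2, dif_neg (show ¬ i - u.length < v.length by omega),
        show i - (u.length + v.length) = i - u.length - v.length from by omega]


lemma cat_ofFn_suffix {AP : Type} (w : ℕ → Set AP) (k : ℕ) :
    cat (List.ofFn (fun j : Fin k => w j)) (suffix w k) = w := by
  funext i
  simp only [cat, suffix, List.length_ofFn]
  by_cases h : i < k
  · rw [dif_pos (by simpa using h)]
    simp
  · rw [dif_neg (by simpa using h),
      show i - k + k = i from by omega]


lemma sat_suffix_of_closed {AP : Type} {ν : LTL AP}
    (ih : ∀ (u : List (Set AP)) (w : ℕ → Set AP), Sat ν (cat u w) → Sat ν w)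
    (u : List (Set AP)) (w : ℕ → Set AP) (h : Sat ν (cat u w)) (k : ℕ) :
    Sat ν (suffix w k) := by
  apply ih (u ++ List.ofFn (fun j : Fin k => w j)) (suffix w k)
  rw [cat_append, cat_ofFn_suffix]
  exact h

theorem pure_universality_suffix_closed :
    ∀ (AP : Type) (ν : LTL AP), PureUniversality ν →
      ∀ (u : List (Set AP)) (w : ℕ → Set AP), Sat ν (cat u w) → Sat ν w := by
  intro AP ν h
  induction h with
  | glob φ =>
    intro u w h hc
    obtain ⟨i, hi, -⟩ := (hc : ∃ i, ¬ Sat φ (suffix w i) ∧ ∀ j < i, True)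
    exact h ⟨i + u.length, by rw [suffix_cat_add]; exact hi, fun j _ => trivial⟩
  | or h1 h2 ih1 ih2 =>
    intro u w h
    rcases h with h | h
    · exact Or.inl (ih1 u w h)
    · exact Or.inr (ih2 u w h)
  | and h1 h2 ih1 ih2 =>
    intro u w h
    exact ⟨ih1 u w h.1, ih2 u w h.2⟩
  | next hν ih =>
    intro u w h
    show Sat _ (suffix w 1)
    have h' : Sat _ (suffix (cat u w) 1) := h
    cases u with
    | nil => rwa [cat_nil] at h'
    | cons a t =>
      rw [suffix_cat_lt _ _ 1 (by simp), List.drop_succ_cons, List.drop_zero] at h'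
      exact sat_suffix_of_closed ih t w h' 1
  | untl h1 h2 ih1 ih2 =>
    intro u w h
    obtain ⟨i, hi, hj⟩ := h
    by_cases hlen : i < u.length
    · refine ⟨0, ?_, fun j hj' => absurd hj' (by omega)⟩
      rw [suffix_zero]
      exact ih2 (u.drop i) w (by rwa [suffix_cat_lt u w i hlen.le] at hi)
    · refine ⟨i - u.length, ?_, fun j hji => ?_⟩
      · rw [← suffix_cat_add u w (i - u.length)]
        have h' : i - u.length + u.length = i := by omega
        rw [h']; exact hi
      · have := hj (j + u.length) (by omega)
        rwa [suffix_cat_add] at this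
  | @rel φ ν' hν ih =>
    intro u w h
    have hν0 : Sat ν' (cat u w) := by
      by_contra hc
      exact h ⟨0, by rw [suffix_zero]; exact hc, fun j hj => absurd hj (Nat.not_lt_zero j)⟩
    intro hc
    obtain ⟨i, hi, -⟩ := hc
    exact hi (sat_suffix_of_closed ih u w hν0 i)
  | @fin ν' hν ih =>
    intro u w h
    obtain ⟨i, hi, -⟩ := h
    by_cases hlen : i < u.length
    · refine ⟨0, ?_, fun j hj => trivial⟩
      rw [suffix_zero]
      exact ih (u.drop i) w (by rwa [suffix_cat_lt u w i hlen.le] at hi)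
    · refine ⟨i - u.length, ?_, fun j hj => trivial⟩
      rw [← suffix_cat_add u w (i - u.length)]
      have h' : i - u.length + u.length = i := by omega
      rw [h']; exact hi
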